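/- Let Φ be a finite set, inc, exc : Φ → ℝ with inc(ψ) > 0 and exc(ψ) > 0 for all ψ ∈ Φ, C > 0, and post(S) = C · (∏_{φ ∈ S} inc(φ)) · (∏_{φ ∈ Φ \ S} exc(φ)) for S ⊆ Φ. Then a subset S ⊆ Φ maximizes post over all subsets of Φ if and only if {φ ∈ Φ | inc(φ) > exc(φ)} ⊆ S ⊆ {φ ∈ Φ | inc(φ) ≥ exc(φ)}; in particular, every maximizer contains every filter with strictly larger inclusion weight and no filter with strictly smaller inclusion weight, and filters with tied weights may be included or dropped without changing the maximum. -/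

import Mathlib

/-!
Writing `w_T φ` for `inc φ` if `φ ∈ T` and `exc φ` otherwise, the posterior is
`C * ∏ φ ∈ Φ, w_T φ`: a product of independent positive per-filter factors. Such a product is
maximal exactly when every factor is, i.e. when `w_S φ = max (inc φ) (exc φ)` for all `φ ∈ Φ`;
if some factor is not maximal, toggling that single filter strictly increases the product.
-/

open Finset Function

namespace Finset

variable {ι R : Type*} [DecidableEq ι]

lemma piecewise_erase {π : ι → Sort*} (s : Finset ι) (i : ι) (f g : ∀ i, π i) :
    (s.erase i).piecewise f g = update (s.piecewise f g) i (g i) := by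
  ext j
  rcases eq_or_ne j i with rfl | hji
  · simp
  · simp [piecewise, hji]

lemma prod_piecewise_of_subset [CommMonoid R] {s t : Finset ι} (hts : t ⊆ s) (f g : ι → R) :
    ∏ x ∈ s, t.piecewise f g x = (∏ x ∈ t, f x) * ∏ x ∈ s \ t, g x := by
  rw [prod_piecewise, inter_eq_right.mpr hts]

variable [CommSemiring R] [LinearOrder R] [IsStrictOrderedRing R]

lemma prod_lt_prod_update {s : Finset ι} {f : ι → R} {i : ι} {b : R} (hi : i ∈ s)
    (hf : ∀ j ∈ s, 0 < f j) (hb : f i < b) :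
    ∏ j ∈ s, f j < ∏ j ∈ s, update f i b j := by
  refine prod_lt_prod hf (fun j _ => ?_) ⟨i, hi, by simpa using hb⟩
  rcases eq_or_ne j i with rfl | hji
  · simpa using hb.le
  · simp [hji]

theorem forall_subset_prod_piecewise_le_iff {s t : Finset ι} {f g : ι → R} (hts : t ⊆ s)
    (hf : ∀ x ∈ s, 0 < f x) (hg : ∀ x ∈ s, 0 < g x) :
    (∀ u ⊆ s, ∏ x ∈ s, u.piecewise f g x ≤ ∏ x ∈ s, t.piecewise f g x) ↔
      (s.filter (fun x => g x < f x) ⊆ t ∧ t ⊆ s.filter (fun x => g x ≤ f x)) := by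
  have hpos : ∀ x ∈ s, 0 < t.piecewise f g x := fun x hx => by
    by_cases hxt : x ∈ t <;> simp [hxt, hf x hx, hg x hx]
  constructor
  · intro hmax
    constructor
    · intro x hx
      obtain ⟨hxs, hgf⟩ := mem_filter.mp hx
      by_contra hxt
      have hlt := prod_lt_prod_update hxs hpos (b := f x) (by simpa [hxt] using hgf)
      rw [← piecewise_insert] at hlt
      exact (hmax _ (insert_subset hxs hts)).not_gt hlt
    · intro x hxt
      refine mem_filter.mpr ⟨hts hxt, not_lt.mp fun hfg => ?_⟩
      have hlt := prod_lt_prod_update (hts hxt) hpos (b := g x) (by simpa [hxt] using hfg)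
      rw [← piecewise_erase] at hlt
      exact (hmax _ ((erase_subset x t).trans hts)).not_gt hlt
  · rintro ⟨hlt_sub, hsub_le⟩ u _
    refine prod_le_prod (fun x hx => ?_) (fun x hx => ?_)
    · by_cases hxu : x ∈ u <;> simp [hxu, (hf x hx).le, (hg x hx).le]
    · by_cases hxt : x ∈ t
      · have hgf := (mem_filter.mp (hsub_le hxt)).2
        by_cases hxu : x ∈ u <;> simp [hxt, hxu, hgf]
      · have hfg : f x ≤ g x := not_lt.mp fun hgf => hxt (hlt_sub (mem_filter.mpr ⟨hx, hgf⟩))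
        by_cases hxu : x ∈ u <;> simp [hxt, hxu, hfg]

end Finset

theorem squid_abduction_maximizer_characterization
    {α : Type*} [DecidableEq α] (Φ : Finset α) (inc exc : α → ℝ)
    (hinc : ∀ ψ ∈ Φ, 0 < inc ψ) (hexc : ∀ ψ ∈ Φ, 0 < exc ψ)
    (C : ℝ) (hC : 0 < C)
    (post : Finset α → ℝ)
    (hpost : ∀ S, post S = C * (∏ φ ∈ S, inc φ) * (∏ φ ∈ Φ \ S, exc φ))
    (S : Finset α) (hS : S ⊆ Φ) :
    (∀ T ⊆ Φ, post T ≤ post S) ↔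
      (Φ.filter (fun φ => exc φ < inc φ) ⊆ S ∧
       S ⊆ Φ.filter (fun φ => exc φ ≤ inc φ)) := by
  have hpost_prod : ∀ T ⊆ Φ, post T = C * ∏ φ ∈ Φ, T.piecewise inc exc φ := fun T hT => by
    rw [hpost, mul_assoc, prod_piecewise_of_subset hT]
  rw [← forall_subset_prod_piecewise_le_iff hS hinc hexc]
  refine forall₂_congr fun T hT => ?_
  rw [hpost_prod T hT, hpost_prod S hS, mul_le_mul_iff_right₀ hC]
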